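/- arXiv:2605.06624 — 2 statements merged into one kernel-verified Lean document; each statement's English description precedes it below -/
import Mathlib

section
/- If K ⊆ ℝ^d is a polyhedral cone (an intersection of finitely many closed half-spaces through the origin), then its dual cone K* is also polyhedral. -/
open RealInnerProductSpace

/-- A cone is polyhedral if it is an intersection of finitely many homogeneous
closed half-spaces. -/
def IsPolyhedralCone {d : ℕ} (K : Set (EuclideanSpace ℝ (Fin d))) : Prop :=
  ∃ (k : ℕ) (a : Fin k → EuclideanSpace ℝ (Fin d)),
    K = {x | ∀ i, 0 ≤ ⟪a i, x⟫}

/-- The Euclidean dual cone of a set. -/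
def dualCone {d : ℕ} (K : Set (EuclideanSpace ℝ (Fin d))) :
    Set (EuclideanSpace ℝ (Fin d)) :=
  {ψ | ∀ y ∈ K, 0 ≤ ⟪ψ, y⟫}


/-- Polyhedrality from an arbitrary finite index type. -/
lemma isPolyhedralCone_of_fintype {d : ℕ} (K : Set (EuclideanSpace ℝ (Fin d)))
    (ι : Type) [Fintype ι] (a : ι → EuclideanSpace ℝ (Fin d))
    (h : K = {x | ∀ i, 0 ≤ ⟪a i, x⟫}) : IsPolyhedralCone K := by
  obtain ⟨e⟩ : Nonempty (ι ≃ Fin (Fintype.card ι)) := ⟨Fintype.equivFin ι⟩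
  refine ⟨Fintype.card ι, a ∘ e.symm, ?_⟩
  rw [h]
  ext x
  constructor
  · intro hx i
    exact hx (e.symm i)
  · intro hx i
    simpa using hx (e i)

/-- The cone generated by finitely many vectors. -/
def coneGen {d k : ℕ} (a : Fin k → EuclideanSpace ℝ (Fin d)) :
    Set (EuclideanSpace ℝ (Fin d)) :=
  {x | ∃ t : Fin k → ℝ, (∀ i, 0 ≤ t i) ∧ x = ∑ i, t i • a i}

/-- Fourier–Motzkin elimination step. -/
lemma fourierMotzkin {d m : ℕ} (v : EuclideanSpace ℝ (Fin d))
    (b : Fin m → EuclideanSpace ℝ (Fin d)) :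
    IsPolyhedralCone {x | ∃ t : ℝ, 0 ≤ t ∧ ∀ j, 0 ≤ ⟪b j, x - t • v⟫} := by
  set c : Fin m → ℝ := fun j => ⟪b j, v⟫ with hc
  classical
  refine isPolyhedralCone_of_fintype _ (Fin m ⊕ (Fin m × Fin m))
    (Sum.elim (fun j => if 0 ≤ c j then b j else 0)
      (fun p => if 0 < c p.1 ∧ c p.2 < 0 then c p.1 • b p.2 - c p.2 • b p.1 else 0)) ?_
  ext x
  simp only [Set.mem_setOf_eq]
  constructor
  · rintro ⟨t, ht, hbt⟩ i
    have key : ∀ j, t * c j ≤ ⟪b j, x⟫ := by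
      intro j
      have := hbt j
      rw [inner_sub_right, real_inner_smul_right] at this
      linarith
    rcases i with j | ⟨i, j⟩
    · simp only [Sum.elim_inl]
      split_ifs with h
      · have := key j; nlinarith
      · simp
    · simp only [Sum.elim_inr]
      split_ifs with h
      · rw [inner_sub_left, real_inner_smul_left, real_inner_smul_left]
        have h1 := key i
        have h2 := key j
        nlinarith [h.1, h.2]
      · simp
  · intro hx
    have hu : ∀ j, 0 ≤ c j → 0 ≤ ⟪b j, x⟫ := by
      intro j hj
      have := hx (Sum.inl j)
      simpa only [Sum.elim_inl, if_pos hj] using this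
    have hw : ∀ i j, 0 < c i → c j < 0 → c j * ⟪b i, x⟫ ≤ c i * ⟪b j, x⟫ := by
      intro i j hi hj
      have := hx (Sum.inr (i, j))
      rw [Sum.elim_inr, if_pos ⟨hi, hj⟩, inner_sub_left, real_inner_smul_left,
        real_inner_smul_left] at this
      linarith
    -- choose t
    set S : Finset (Fin m) := Finset.univ.filter (fun i => 0 < c i) with hS
    by_cases hSne : S.Nonempty
    · set t : ℝ := S.inf' hSne (fun i => ⟪b i, x⟫ / c i) with htdef
      have hci : ∀ i ∈ S, 0 < c i := fun i hi => (Finset.mem_filter.mp hi).2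
      have ht0 : 0 ≤ t := by
        apply Finset.le_inf'
        intro i hi
        exact div_nonneg (hu i (le_of_lt (hci i hi))) (le_of_lt (hci i hi))
      refine ⟨t, ht0, ?_⟩
      intro j
      rw [inner_sub_right, real_inner_smul_right]
      rw [sub_nonneg]
      rcases lt_trichotomy (c j) 0 with hj | hj | hj
      · -- lower bound: t ≥ ⟪b j, x⟫ / c j
        obtain ⟨i, hiS, hit⟩ := Finset.exists_mem_eq_inf' hSne (fun i => ⟪b i, x⟫ / c i)
        have hi := hci i hiS
        have hpair := hw i j hi hj
        have hti : t * c i = ⟪b i, x⟫ := by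
          rw [htdef, hit]; exact div_mul_cancel₀ _ (ne_of_gt hi)
        show t * c j ≤ ⟪b j, x⟫
        nlinarith
      · show t * c j ≤ ⟪b j, x⟫
        rw [hj, mul_zero]
        exact hu j (le_of_eq hj.symm)
      · have hjS : j ∈ S := Finset.mem_filter.mpr ⟨Finset.mem_univ _, hj⟩
        have := Finset.inf'_le (fun i => ⟪b i, x⟫ / c i) hjS
        calc t * c j ≤ (⟪b j, x⟫ / c j) * c j := by
              apply mul_le_mul_of_nonneg_right _ (le_of_lt hj)
              exact this
          _ = ⟪b j, x⟫ := div_mul_cancel₀ _ (ne_of_gt hj)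
    · -- no upper bounds
      set T : Finset ℝ := insert 0 (Finset.univ.image (fun j => ⟪b j, x⟫ / c j)) with hT
      have hTne : T.Nonempty := ⟨0, Finset.mem_insert_self _ _⟩
      set t : ℝ := T.max' hTne with htdef
      have ht0 : 0 ≤ t := Finset.le_max' T 0 (Finset.mem_insert_self _ _)
      refine ⟨t, ht0, ?_⟩
      intro j
      rw [inner_sub_right, real_inner_smul_right, sub_nonneg]
      rcases lt_trichotomy (c j) 0 with hj | hj | hj
      · have hmem : ⟪b j, x⟫ / c j ∈ T :=
          Finset.mem_insert_of_mem (Finset.mem_image_of_mem _ (Finset.mem_univ j))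
        have hle : ⟪b j, x⟫ / c j ≤ t := Finset.le_max' T _ hmem
        calc t * c j ≤ (⟪b j, x⟫ / c j) * c j :=
              mul_le_mul_of_nonpos_right hle (le_of_lt hj)
          _ = ⟪b j, x⟫ := div_mul_cancel₀ _ (ne_of_lt hj)
      · show t * c j ≤ ⟪b j, x⟫
        rw [hj, mul_zero]
        exact hu j (le_of_eq hj.symm)
      · exact absurd ⟨j, Finset.mem_filter.mpr ⟨Finset.mem_univ _, hj⟩⟩ hSne

/-- A finitely generated cone is polyhedral. -/
lemma coneGen_isPolyhedral {d : ℕ} : ∀ (k : ℕ) (a : Fin k → EuclideanSpace ℝ (Fin d)),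
    IsPolyhedralCone (coneGen a) := by
  intro k
  induction k with
  | zero =>
    intro a
    have h0 : coneGen a = {x | ∀ p : Fin d × Bool,
        0 ≤ ⟪(fun p : Fin d × Bool => if p.2 then EuclideanSpace.single p.1 (1:ℝ)
          else -EuclideanSpace.single p.1 (1:ℝ)) p, x⟫} := by
      ext x
      simp only [coneGen, Set.mem_setOf_eq]
      constructor
      · rintro ⟨t, -, rfl⟩ p
        simp
      · intro hx
        refine ⟨Fin.elim0, fun i => i.elim0, ?_⟩
        simp only [Finset.univ_eq_empty, Finset.sum_empty]
        ext j
        have h1 := hx (j, true)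
        have h2 := hx (j, false)
        simp only [if_pos, if_neg, Bool.false_eq_true, not_false_iff, inner_neg_left,
          EuclideanSpace.inner_single_left, map_one, one_mul, neg_nonneg] at h1 h2
        exact le_antisymm h2 h1
    rw [h0]
    exact isPolyhedralCone_of_fintype _ _ _ rfl
  | succ k ih =>
    intro a
    obtain ⟨m, b, hb⟩ := ih (fun i => a i.succ)
    have key : coneGen a = {x | ∃ t : ℝ, 0 ≤ t ∧ ∀ j, 0 ≤ ⟪b j, x - t • a 0⟫} := by
      ext x
      simp only [coneGen, Set.mem_setOf_eq]
      constructor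
      · rintro ⟨t, ht, rfl⟩
        refine ⟨t 0, ht 0, ?_⟩
        have hmem : (∑ i, t i • a i) - t 0 • a 0 ∈ coneGen (fun i : Fin k => a i.succ) := by
          refine ⟨fun i => t i.succ, fun i => ht i.succ, ?_⟩
          rw [Fin.sum_univ_succ]
          abel
        rw [hb] at hmem
        exact hmem
      · rintro ⟨t, ht, hx⟩
        have hmem : x - t • a 0 ∈ coneGen (fun i : Fin k => a i.succ) := by
          rw [hb]; exact hx
        obtain ⟨s, hs, hxs⟩ := hmem
        refine ⟨Fin.cons t s, ?_, ?_⟩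
        · intro i
          refine Fin.cases ?_ ?_ i
          · exact ht
          · exact hs
        · rw [Fin.sum_univ_succ, Fin.cons_zero]
          simp only [Fin.cons_succ]
          rw [← hxs]
          abel
    rw [key]
    exact fourierMotzkin (a 0) b

/-- The dual cone of a polyhedral cone is polyhedral. -/
theorem dualCone_isPolyhedral_of_isPolyhedral {d : ℕ}
    (K : Set (EuclideanSpace ℝ (Fin d))) (hK : IsPolyhedralCone K) :
    IsPolyhedralCone (dualCone K) := by
  obtain ⟨k, a, rfl⟩ := hK
  obtain ⟨m, b, hb⟩ := coneGen_isPolyhedral k a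
  have hgen : ∀ i, a i ∈ coneGen a := by
    intro i
    classical
    refine ⟨fun i' => if i' = i then 1 else 0, fun i' => by positivity, ?_⟩
    simp only [ite_smul, one_smul, zero_smul, Finset.sum_ite_eq', Finset.mem_univ, if_true]
  have hbK : ∀ j, b j ∈ {x | ∀ i, 0 ≤ ⟪a i, x⟫} := by
    intro j i
    have := (hb ▸ hgen i) j
    rwa [real_inner_comm] at this
  have : dualCone {x | ∀ i, 0 ≤ ⟪a i, x⟫} = coneGen a := by
    ext ψ
    constructor
    · intro hψ
      rw [hb]
      intro j
      have := hψ (b j) (hbK j)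
      rwa [real_inner_comm] at this
    · rintro ⟨t, ht, rfl⟩ y hy
      rw [sum_inner]
      apply Finset.sum_nonneg
      intro i _
      rw [real_inner_smul_left]
      exact mul_nonneg (ht i) (hy i)
  rw [this, hb]
  exact ⟨m, b, rfl⟩
end

section
/- Bilevel regret bound: Under the inner and outer regret bounds — outer regret ≤ (√d·U/γ_p)√(2h log m) and per-block inner regret on block k ≤ (√d·U/γ_q)√(2|I_k| log|A|) with Σ_k |I_k| ≤ T over h blocks — the total bilevel regret satisfies R_T ≤ √d·U·( √(2h log m)/γ_p + √(2hT log|A|)/γ_q ). -/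
/-- Bilevel regret bound: if the outer regret is at most `(√d·U/γ_p)√(2h log m)`
and the inner regret on block `k` is at most `(√d·U/γ_q)√(2|I_k| log|A|)` with
`Σ_k |I_k| ≤ T`, then the total bilevel regret (outer plus summed inner regrets)
is at most `√d·U·(√(2h log m)/γ_p + √(2hT log|A|)/γ_q)`. -/
theorem bilevel_regret_bound {d m A h T : ℕ}
    (hd : 0 < d) (hm : 0 < m) (hA : 0 < A) (hh : 0 < h) (hT : 0 < T)
    (U γp γq : ℝ) (hU : 0 < U) (hγp : 0 < γp) (hγq : 0 < γq)
    (I : Fin h → ℕ) (hI : ∑ k, I k ≤ T)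
    (Rout : ℝ) (Rin : Fin h → ℝ)
    (hRout : Rout ≤ (Real.sqrt d * U / γp) * Real.sqrt (2 * h * Real.log m))
    (hRin : ∀ k, Rin k ≤ (Real.sqrt d * U / γq) * Real.sqrt (2 * I k * Real.log A)) :
    Rout + ∑ k, Rin k
      ≤ Real.sqrt d * U *
          (Real.sqrt (2 * h * Real.log m) / γp
            + Real.sqrt (2 * h * T * Real.log A) / γq) := by
  have hlogA : 0 ≤ Real.log A := Real.log_natCast_nonneg A
  have hc : 0 ≤ Real.sqrt d * U / γq := by positivity
  have hsum : ∑ k, Real.sqrt (2 * I k * Real.log A)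
      ≤ Real.sqrt (2 * h * T * Real.log A) := by
    apply Real.le_sqrt_of_sq_le
    calc (∑ k, Real.sqrt (2 * I k * Real.log A)) ^ 2
        ≤ (Finset.univ.card : ℝ) * ∑ k, Real.sqrt (2 * I k * Real.log A) ^ 2 :=
          sq_sum_le_card_mul_sum_sq
      _ = h * ∑ k, (2 * (I k : ℝ) * Real.log A) := by
          rw [Finset.card_univ, Fintype.card_fin]
          congr 1
          exact Finset.sum_congr rfl fun k _ => Real.sq_sqrt (by positivity)
      _ = h * (2 * (∑ k, (I k : ℝ)) * Real.log A) := by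
          rw [← Finset.sum_mul, ← Finset.mul_sum]
      _ ≤ h * (2 * T * Real.log A) := by
          have : (∑ k, (I k : ℝ)) ≤ T := by
            rw [← Nat.cast_sum]; exact_mod_cast hI
          gcongr
      _ = 2 * h * T * Real.log A := by ring
  have h2 : ∑ k, Rin k ≤ (Real.sqrt d * U / γq) * Real.sqrt (2 * h * T * Real.log A) := by
    calc ∑ k, Rin k ≤ ∑ k, (Real.sqrt d * U / γq) * Real.sqrt (2 * I k * Real.log A) :=
          Finset.sum_le_sum fun k _ => hRin k
      _ = (Real.sqrt d * U / γq) * ∑ k, Real.sqrt (2 * I k * Real.log A) := by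
          rw [Finset.mul_sum]
      _ ≤ _ := by gcongr
  have := add_le_add hRout h2
  calc Rout + ∑ k, Rin k ≤ _ := this
    _ = Real.sqrt d * U *
          (Real.sqrt (2 * h * Real.log m) / γp
            + Real.sqrt (2 * h * T * Real.log A) / γq) := by ring
end
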